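/- Let Γ be a finite simple graph that is the join of two nonempty graphs Γ₁ and Γ₂. Then rank(A_Γ) = rank(A_{Γ₁}) + rank(A_{Γ₂}); in particular rank(A_Γ) ≥ 2. -/

import Mathlib

open scoped Pointwise

/-- `algA G i` is the set of elements of `G` whose centralizer contains a
free abelian subgroup of rank at most `i` as a subgroup of finite index. -/
def algA (G : Type*) [Group G] (i : ℕ) : Set G :=
  {g : G | ∃ H : Subgroup (Subgroup.centralizer ({g} : Set G)),
    H.FiniteIndex ∧ ∃ n : ℕ, n ≤ i ∧ Nonempty (H ≃* Multiplicative (Fin n → ℤ))}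

/-- `G` is covered by finitely many left translates of `algA G i`. -/
def algCovers (G : Type*) [Group G] (i : ℕ) : Prop :=
  ∃ F : Finset G, (⋃ g ∈ F, g • algA G i) = Set.univ

/-- `r(G)`: the least `i` such that `G` is a finite union of translates of `algA G i`
(`⊤` if there is no such `i`). -/
noncomputable def algr (G : Type*) [Group G] : ℕ∞ :=
  sInf {n : ℕ∞ | ∃ i : ℕ, n = (i : ℕ∞) ∧ algCovers G i}

/-- The algebraic rank of `G`: the supremum of `r(G*)` over all finite index
subgroups `G*` of `G`. -/
noncomputable def algRank (G : Type*) [Group G] : ℕ∞ :=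
  ⨆ (H : Subgroup G) (_ : H.FiniteIndex), algr H

/-- The commutator relators of a right-angled Artin group: one relator
`u v u⁻¹ v⁻¹` for each edge `{u, v}` of the graph. -/
def raagRels {V : Type*} (G : SimpleGraph V) : Set (FreeGroup V) :=
  {r | ∃ u v : V, G.Adj u v ∧
    r = FreeGroup.of u * FreeGroup.of v * (FreeGroup.of u)⁻¹ * (FreeGroup.of v)⁻¹}

/-- The right-angled Artin group `A_Γ` of a finite simple graph `Γ`:
`⟨V ∣ uv = vu whenever {u,v} is an edge⟩`. -/
def RAAG {V : Type*} (G : SimpleGraph V) : Type _ := PresentedGroup (raagRels G)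

noncomputable instance {V : Type*} (G : SimpleGraph V) : Group (RAAG G) :=
  inferInstanceAs (Group (PresentedGroup (raagRels G)))

/-- The join of two simple graphs: the disjoint union of the two graphs, with every
vertex of the first adjacent to every vertex of the second. -/
def SimpleGraph.graphJoin {V₁ V₂ : Type*} (G₁ : SimpleGraph V₁) (G₂ : SimpleGraph V₂) :
    SimpleGraph (V₁ ⊕ V₂) where
  Adj x y :=
    match x, y with
    | .inl a, .inl b => G₁.Adj a b
    | .inr a, .inr b => G₂.Adj a b
    | .inl _, .inr _ => True
    | .inr _, .inl _ => True
  symm := by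
    constructor
    rintro (a | a) (b | b) h
    · exact h.symm
    · trivial
    · trivial
    · exact h.symm
  loopless := by
    constructor
    rintro (a | a) h
    · exact G₁.irrefl h
    · exact G₂.irrefl h

/-! The join of `Γ₁` and `Γ₂` presents the direct product `A_{Γ₁} × A_{Γ₂}`, so everything reduces
to additivity of `rank` on direct products of arbitrary groups. The centralizer of `(a, b)` is
`C(a) × C(b)`, and a finite-index `ℤⁿ` inside a product meets the two factors in finite-index
subgroups `ℤᵏ`, `ℤˡ` with `k + l ≤ n`; hence `(a, b) ∈ A_m` exactly when `a ∈ A_k` and `b ∈ A_l`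
for some `k + l ≤ m`. This makes `r` additive: if `G × G'` is covered at level `n` and `l` is least
with `G'` covered at level `l`, then a point of `G` not covered at level `n - l` would force `G'` to
be covered at level `l - 1`. Passing to a finite-index subgroup can only increase `r`, and a
finite-index subgroup of `G × G'` contains a product of finite-index subgroups of the factors, so
`rank` is additive as well. Finally `rank A_Γ ≥ 1` for nonempty `Γ`: elements of `A_0` have finite
order, so the exponent-sum map `A_Γ → ℤ` would have finite, hence trivial, image. -/

theorem exists_mulEquiv_freeAbelian_of_injective {K : Type*} [Group K] {n : ℕ}
    (f : K →* Multiplicative (Fin n → ℤ)) (hf : Function.Injective f) :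
    ∃ k ≤ n, Nonempty (K ≃* Multiplicative (Fin k → ℤ)) := by
  let φ := (MonoidHom.toAdditiveLeft f.range.subtype).toIntLinearMap
  have hφ : Function.Injective φ := f.range.subtype_injective
  obtain ⟨k, b⟩ := Submodule.basisOfPid (Pi.basisFun ℤ (Fin n)) (LinearMap.range φ)
  refine ⟨k, ?_, ⟨(MonoidHom.ofInjective hf).trans (AddEquiv.toMultiplicativeRight ?_)⟩⟩
  · simpa [Module.finrank_eq_card_basis b] using Submodule.finrank_le (LinearMap.range φ)
  · exact ((LinearEquiv.ofInjective φ hφ).trans b.equivFun).toAddEquiv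

theorem le_of_injective_freeAbelian {a b : ℕ}
    (f : Multiplicative (Fin a → ℤ) →* Multiplicative (Fin b → ℤ)) (hf : Function.Injective f) :
    a ≤ b := by
  simpa using LinearMap.finrank_le_finrank_of_injective
    (f := (AddMonoidHom.toMultiplicative.symm f).toIntLinearMap) hf

noncomputable def freeAbelianProdEquiv (a b : ℕ) :
    Multiplicative (Fin a → ℤ) × Multiplicative (Fin b → ℤ) ≃*
      Multiplicative (Fin (a + b) → ℤ) :=
  (MulEquiv.prodMultiplicative (G := Fin a → ℤ) (H := Fin b → ℤ)).symm.trans <|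
    AddEquiv.toMultiplicative <|
      (RingEquiv.sumArrowEquivProdArrow (Fin a) (Fin b) ℤ).toAddEquiv.symm.trans
        (LinearEquiv.funCongrLeft ℤ ℤ finSumFinEquiv.symm).toAddEquiv

section GroupTheory

variable {G G' : Type*} [Group G] [Group G']

theorem Subgroup.finiteIndex_comap (H : Subgroup G') [H.FiniteIndex] (f : G →* G') :
    (H.comap f).FiniteIndex :=
  ⟨by rw [Subgroup.index_comap]; exact H.isFiniteRelIndex_of_finiteIndex.relIndex_ne_zero⟩

instance Subgroup.finiteIndex_prod (H : Subgroup G) (K : Subgroup G') [H.FiniteIndex]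
    [K.FiniteIndex] : (H.prod K).FiniteIndex :=
  ⟨by
    rw [Subgroup.index_prod]
    exact mul_ne_zero Subgroup.FiniteIndex.index_ne_zero Subgroup.FiniteIndex.index_ne_zero⟩

instance MulEquiv.finiteIndex_range (e : G ≃* G') :
    (e : G →* G').range.FiniteIndex := by
  rw [MonoidHom.range_eq_top_of_surjective _ e.surjective]
  infer_instance

theorem Subgroup.centralizer_singleton_prod (a : G) (b : G') :
    Subgroup.centralizer {(a, b)} = (Subgroup.centralizer {a}).prod (Subgroup.centralizer {b}) :=
  SetLike.coe_injective <| by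
    change Set.centralizer {(a, b)} = _
    rw [Subgroup.coe_prod, ← Set.singleton_prod_singleton,
      Set.centralizer_prod (Set.singleton_nonempty a) (Set.singleton_nonempty b)]
    rfl

end GroupTheory

theorem ENat.add_le_natCast_iff {a b : ℕ∞} {n : ℕ} :
    a + b ≤ n ↔ ∃ k l : ℕ, k + l ≤ n ∧ a ≤ k ∧ b ≤ l := by
  refine ⟨fun h => ?_, fun ⟨k, l, hkl, hk, hl⟩ => (add_le_add hk hl).trans (mod_cast hkl)⟩
  lift a to ℕ using ne_top_of_le_ne_top (ENat.natCast_ne_top n) (le_self_add.trans h)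
  lift b to ℕ using ne_top_of_le_ne_top (ENat.natCast_ne_top n) (le_add_self.trans h)
  exact ⟨a, b, mod_cast h, le_rfl, le_rfl⟩

theorem ENat.eq_of_forall_le_natCast_iff {a b : ℕ∞} (h : ∀ n : ℕ, a ≤ n ↔ b ≤ n) : a = b :=
  WithTop.eq_of_forall_le_coe_iff h

def IsVirtuallyFreeAbelianOfRankLE (G : Type*) [Group G] (i : ℕ) : Prop :=
  ∃ H : Subgroup G, H.FiniteIndex ∧ ∃ n ≤ i, Nonempty (H ≃* Multiplicative (Fin n → ℤ))

namespace IsVirtuallyFreeAbelianOfRankLE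

variable {G G' : Type*} [Group G] [Group G'] {i : ℕ}

theorem mono {j : ℕ} (h : IsVirtuallyFreeAbelianOfRankLE G i) (hij : i ≤ j) :
    IsVirtuallyFreeAbelianOfRankLE G j :=
  let ⟨H, hH, n, hn, e⟩ := h
  ⟨H, hH, n, hn.trans hij, e⟩

theorem of_injective {f : G →* G'} (hf : Function.Injective f) [f.range.FiniteIndex]
    (h : IsVirtuallyFreeAbelianOfRankLE G i) : IsVirtuallyFreeAbelianOfRankLE G' i := by
  obtain ⟨H, hH, n, hn, ⟨e⟩⟩ := h
  refine ⟨H.map f, ⟨?_⟩, n, hn, ⟨(H.equivMapOfInjective f hf).symm.trans e⟩⟩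
  rw [H.index_map_of_injective hf]
  exact mul_ne_zero hH.index_ne_zero Subgroup.FiniteIndex.index_ne_zero

theorem of_mulEquiv (e : G ≃* G') (h : IsVirtuallyFreeAbelianOfRankLE G i) :
    IsVirtuallyFreeAbelianOfRankLE G' i :=
  of_injective (f := (e : G →* G')) e.injective h

theorem prod {k l : ℕ} (h₁ : IsVirtuallyFreeAbelianOfRankLE G k)
    (h₂ : IsVirtuallyFreeAbelianOfRankLE G' l) :
    IsVirtuallyFreeAbelianOfRankLE (G × G') (k + l) :=
  let ⟨H₁, _, n₁, hn₁, ⟨e₁⟩⟩ := h₁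
  let ⟨H₂, _, n₂, hn₂, ⟨e₂⟩⟩ := h₂
  ⟨H₁.prod H₂, inferInstance, n₁ + n₂, add_le_add hn₁ hn₂,
    ⟨((H₁.prodEquiv H₂).trans (e₁.prodCongr e₂)).trans (freeAbelianProdEquiv n₁ n₂)⟩⟩

theorem exists_add_le_of_prod {m : ℕ} (h : IsVirtuallyFreeAbelianOfRankLE (G × G') m) :
    ∃ k l, k + l ≤ m ∧
      IsVirtuallyFreeAbelianOfRankLE G k ∧ IsVirtuallyFreeAbelianOfRankLE G' l := by
  obtain ⟨H, _, n, hn, ⟨e⟩⟩ := h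
  let K₁ := H.comap (MonoidHom.inl G G')
  let K₂ := H.comap (MonoidHom.inr G G')
  let j : K₁ × K₂ →* H := (K₁.subtype.prodMap K₂.subtype).codRestrict H fun x => by
    simpa [Prod.map] using H.mul_mem x.1.2 x.2.2
  let ψ := e.toMonoidHom.comp j
  have hψ : Function.Injective ψ := e.injective.comp fun x y hxy =>
    Prod.ext (Subtype.ext congr(($hxy).1.1)) (Subtype.ext congr(($hxy).1.2))
  obtain ⟨k, -, ⟨e₁⟩⟩ := exists_mulEquiv_freeAbelian_of_injective (ψ.comp (MonoidHom.inl _ _))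
    (hψ.comp fun _ _ h => congr(($h).1))
  obtain ⟨l, -, ⟨e₂⟩⟩ := exists_mulEquiv_freeAbelian_of_injective (ψ.comp (MonoidHom.inr _ _))
    (hψ.comp fun _ _ h => congr(($h).2))
  have hkl : k + l ≤ n := le_of_injective_freeAbelian
    (ψ.comp ((freeAbelianProdEquiv k l).symm.trans (e₁.prodCongr e₂).symm).toMonoidHom)
    (hψ.comp (MulEquiv.injective _))
  exact ⟨k, l, hkl.trans hn, ⟨K₁, H.finiteIndex_comap _, k, le_rfl, ⟨e₁⟩⟩,
    ⟨K₂, H.finiteIndex_comap _, l, le_rfl, ⟨e₂⟩⟩⟩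

theorem prod_iff {m : ℕ} : IsVirtuallyFreeAbelianOfRankLE (G × G') m ↔
    ∃ k l, k + l ≤ m ∧ IsVirtuallyFreeAbelianOfRankLE G k ∧ IsVirtuallyFreeAbelianOfRankLE G' l :=
  ⟨exists_add_le_of_prod, fun ⟨_, _, hkl, h₁, h₂⟩ => (h₁.prod h₂).mono hkl⟩

end IsVirtuallyFreeAbelianOfRankLE

section AlgA

variable {G G' : Type*} [Group G] [Group G'] {i : ℕ}

theorem mem_algA {g : G} :
    g ∈ algA G i ↔ IsVirtuallyFreeAbelianOfRankLE (Subgroup.centralizer {g}) i :=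
  Iff.rfl

theorem algA_mono {j : ℕ} (hij : i ≤ j) : algA G i ⊆ algA G j :=
  fun _ hg => IsVirtuallyFreeAbelianOfRankLE.mono hg hij

/-- The centralizer of `g` embeds in that of `f g`, and the image contains the finite-index
subgroup `C(f g) ∩ f(G)` since `f` is injective. -/
theorem map_mem_algA {f : G →* G'} (hf : Function.Injective f) [f.range.FiniteIndex] {g : G}
    (hg : g ∈ algA G i) : f g ∈ algA G' i := by
  let c : Subgroup.centralizer {g} →* Subgroup.centralizer {f g} :=
    (f.comp (Subgroup.centralizer {g}).subtype).codRestrict _ fun x => by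
      simpa [Subgroup.mem_centralizer_singleton_iff] using
        congr(f $(Subgroup.mem_centralizer_singleton_iff.mp x.2))
  have hc : f.range.subgroupOf (Subgroup.centralizer {f g}) ≤ c.range := by
    rintro ⟨_, hy⟩ ⟨x, rfl⟩
    refine ⟨⟨x, ?_⟩, rfl⟩
    rw [Subgroup.mem_centralizer_singleton_iff] at hy ⊢
    exact hf (by simpa using hy)
  have := Subgroup.finiteIndex_of_le hc
  exact IsVirtuallyFreeAbelianOfRankLE.of_injective (f := c)
    (fun x y h => Subtype.ext (hf congr(($h).1))) hg

theorem mk_mem_algA_prod_iff {a : G} {b : G'} {m : ℕ} : (a, b) ∈ algA (G × G') m ↔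
    ∃ k l, k + l ≤ m ∧ a ∈ algA G k ∧ b ∈ algA G' l := by
  let e := (MulEquiv.subgroupCongr (Subgroup.centralizer_singleton_prod a b)).trans
    (Subgroup.prodEquiv _ _)
  simp only [mem_algA, ← IsVirtuallyFreeAbelianOfRankLE.prod_iff]
  exact ⟨.of_mulEquiv e, .of_mulEquiv e.symm⟩

end AlgA

section AlgCovers

variable {G G' : Type*} [Group G] [Group G'] {i : ℕ}

theorem algCovers_iff :
    algCovers G i ↔ ∃ F : Finset G, ∀ x : G, ∃ g ∈ F, g⁻¹ * x ∈ algA G i := by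
  simp [algCovers, Set.eq_univ_iff_forall, Set.mem_smul_set_iff_inv_smul_mem]

theorem algCovers.mono {j : ℕ} (h : algCovers G i) (hij : i ≤ j) : algCovers G j := by
  obtain ⟨F, hF⟩ := algCovers_iff.mp h
  exact algCovers_iff.mpr ⟨F, fun x => (hF x).imp fun _ => And.imp_right (algA_mono hij ·)⟩

/-- Cover `G'` by the finitely many cosets `t f(G)` and each `f(G)` by the image of the cover
of `G`. -/
theorem algCovers.of_injective {f : G →* G'} (hf : Function.Injective f) [f.range.FiniteIndex]
    (h : algCovers G i) : algCovers G' i := by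
  classical
  obtain ⟨F, hF⟩ := algCovers_iff.mp h
  have : Fintype (G' ⧸ f.range) := Fintype.ofFinite _
  refine algCovers_iff.mpr
    ⟨(Finset.univ ×ˢ F).image fun p : (G' ⧸ f.range) × G => p.1.out * f p.2, fun x => ?_⟩
  obtain ⟨y, hy⟩ : (QuotientGroup.mk x : G' ⧸ f.range).out⁻¹ * x ∈ f.range :=
    QuotientGroup.leftRel_apply.mp (Quotient.mk_out x)
  obtain ⟨g, hg, hgy⟩ := hF y
  refine ⟨_, Finset.mem_image.mpr ⟨(QuotientGroup.mk x, g), by simp [hg], rfl⟩, ?_⟩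
  simpa [mul_assoc, hy] using map_mem_algA hf hgy

theorem algCovers.of_mulEquiv (h : algCovers G i) (e : G ≃* G') : algCovers G' i :=
  h.of_injective (f := (e : G →* G')) e.injective

theorem algCovers.prod {k l : ℕ} (h₁ : algCovers G k) (h₂ : algCovers G' l) :
    algCovers (G × G') (k + l) := by
  obtain ⟨F₁, hF₁⟩ := algCovers_iff.mp h₁
  obtain ⟨F₂, hF₂⟩ := algCovers_iff.mp h₂
  refine algCovers_iff.mpr ⟨F₁ ×ˢ F₂, fun x => ?_⟩
  obtain ⟨g₁, hg₁, hx₁⟩ := hF₁ x.1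
  obtain ⟨g₂, hg₂, hx₂⟩ := hF₂ x.2
  exact ⟨(g₁, g₂), Finset.mem_product.mpr ⟨hg₁, hg₂⟩,
    mk_mem_algA_prod_iff.mpr ⟨k, l, le_rfl, hx₁, hx₂⟩⟩

/-- If some `x` were covered by no translate at level `n - (a + 1)`, covering the points `(x, y)`
at level `n` would leave level at most `a` for `y`, so `G'` would be covered at level `a`. -/
theorem algCovers.of_prod_of_not_algCovers {n a : ℕ} (h : algCovers (G × G') n)
    (ha : ¬ algCovers G' a) : algCovers G (n - (a + 1)) := by
  classical
  obtain ⟨F, hF⟩ := algCovers_iff.mp h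
  refine algCovers_iff.mpr ⟨F.image Prod.fst, fun x => ?_⟩
  by_contra! hx
  refine ha (algCovers_iff.mpr ⟨F.image Prod.snd, fun y => ?_⟩)
  obtain ⟨⟨g, g'⟩, hgF, hxy⟩ := hF (x, y)
  obtain ⟨k, l, hkl, hk, hl⟩ := mk_mem_algA_prod_iff.mp hxy
  have : ¬ k ≤ n - (a + 1) := fun hk' => hx g (Finset.mem_image_of_mem _ hgF) (algA_mono hk' hk)
  exact ⟨g', Finset.mem_image_of_mem _ hgF, algA_mono (by omega) hl⟩

theorem algCovers.of_prod_left {n : ℕ} (h : algCovers (G × G') n) : algCovers G n := by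
  classical
  obtain ⟨F, hF⟩ := algCovers_iff.mp h
  refine algCovers_iff.mpr ⟨F.image Prod.fst, fun x => ?_⟩
  obtain ⟨⟨g, g'⟩, hgF, hx⟩ := hF (x, 1)
  obtain ⟨k, l, hkl, hk, -⟩ := mk_mem_algA_prod_iff.mp hx
  exact ⟨g, Finset.mem_image_of_mem _ hgF, algA_mono (by omega) hk⟩

theorem algCovers.of_prod_right {n : ℕ} (h : algCovers (G × G') n) : algCovers G' n :=
  (h.of_mulEquiv (MulEquiv.prodComm : G × G' ≃* G' × G)).of_prod_left

theorem algCovers_prod_iff {n : ℕ} : algCovers (G × G') n ↔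
    ∃ k l, k + l ≤ n ∧ algCovers G k ∧ algCovers G' l := by
  classical
  refine ⟨fun h => ?_, fun ⟨k, l, hkl, h₁, h₂⟩ => (h₁.prod h₂).mono hkl⟩
  have hl : ∃ l, algCovers G' l := ⟨n, h.of_prod_right⟩
  obtain hl0 | hl0 := Nat.eq_zero_or_pos (Nat.find hl)
  · exact ⟨n, 0, le_rfl, h.of_prod_left, hl0 ▸ Nat.find_spec hl⟩
  · refine ⟨n - Nat.find hl, Nat.find hl, ?_, ?_, Nat.find_spec hl⟩
    · have := Nat.find_min' hl h.of_prod_right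
      omega
    · simpa [Nat.sub_add_cancel hl0] using
        h.of_prod_of_not_algCovers (Nat.find_min hl (Nat.sub_one_lt_of_lt hl0))

end AlgCovers

section Algr

variable {G G' : Type*} [Group G] [Group G']

theorem algr_le_natCast_iff {n : ℕ} : algr G ≤ n ↔ algCovers G n := by
  refine ⟨fun h => ?_, fun h => sInf_le ⟨n, rfl, h⟩⟩
  by_contra hn
  have : ((n + 1 : ℕ) : ℕ∞) ≤ algr G := le_sInf <| by
    rintro _ ⟨j, rfl, hj⟩
    exact Nat.cast_le.mpr (not_le.mp fun hjn => hn (hj.mono hjn))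
  exact absurd (this.trans h) (by norm_cast; omega)

theorem algr_le_of_injective {f : G →* G'} (hf : Function.Injective f) [f.range.FiniteIndex] :
    algr G' ≤ algr G :=
  le_sInf fun _ ⟨j, hj, h⟩ => hj ▸ sInf_le ⟨j, rfl, h.of_injective hf⟩

theorem algr_congr (e : G ≃* G') : algr G = algr G' :=
  le_antisymm (algr_le_of_injective (f := (e.symm : G' →* G)) e.symm.injective)
    (algr_le_of_injective (f := (e : G →* G')) e.injective)

theorem algr_prod : algr (G × G') = algr G + algr G' :=
  ENat.eq_of_forall_le_natCast_iff fun n => by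
    simp only [algr_le_natCast_iff, algCovers_prod_iff, ENat.add_le_natCast_iff]

end Algr

section AlgRank

variable {G G' : Type*} [Group G] [Group G']

theorem algr_le_algr_of_finiteIndex (K : Subgroup G) [K.FiniteIndex] : algr G ≤ algr K :=
  have : K.subtype.range.FiniteIndex := by rw [Subgroup.range_subtype]; infer_instance
  algr_le_of_injective K.subtype_injective

theorem algr_le_algRank (K : Subgroup G) [K.FiniteIndex] : algr K ≤ algRank G :=
  le_iSup₂ (f := fun (H : Subgroup G) _ => algr H) K inferInstance

theorem algr_le_algRank_self : algr G ≤ algRank G :=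
  (algr_congr Subgroup.topEquiv).ge.trans (algr_le_algRank ⊤)

theorem algRank_le_of_mulEquiv (e : G ≃* G') : algRank G ≤ algRank G' :=
  iSup₂_le fun H _ =>
    have : (H.map (e : G →* G')).FiniteIndex :=
      ⟨by rw [H.index_map_equiv]; exact Subgroup.FiniteIndex.index_ne_zero⟩
    (algr_congr (e.subgroupMap H)).le.trans (algr_le_algRank _)

theorem algRank_congr (e : G ≃* G') : algRank G = algRank G' :=
  le_antisymm (algRank_le_of_mulEquiv e) (algRank_le_of_mulEquiv e.symm)

theorem algr_subgroup_prod (K₁ : Subgroup G) (K₂ : Subgroup G') :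
    algr (K₁.prod K₂) = algr K₁ + algr K₂ :=
  (algr_congr (K₁.prodEquiv K₂)).trans algr_prod

theorem algRank_prod : algRank (G × G') = algRank G + algRank G' := by
  refine le_antisymm (iSup₂_le fun H _ => ?_) ?_
  · let K₁ := H.comap (MonoidHom.inl G G')
    let K₂ := H.comap (MonoidHom.inr G G')
    have := H.finiteIndex_comap (MonoidHom.inl G G')
    have := H.finiteIndex_comap (MonoidHom.inr G G')
    have hK : K₁.prod K₂ ≤ H := fun x ⟨h₁, h₂⟩ => by simpa using H.mul_mem h₁ h₂
    calc algr H
        ≤ algr ((K₁.prod K₂).subgroupOf H) := algr_le_algr_of_finiteIndex _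
      _ = algr K₁ + algr K₂ :=
        (algr_congr (Subgroup.subgroupOfEquivOfLe hK)).trans (algr_subgroup_prod K₁ K₂)
      _ ≤ algRank G + algRank G' := add_le_add (algr_le_algRank K₁) (algr_le_algRank K₂)
  · refine ENat.biSup_add_biSup_le' (p := Subgroup.FiniteIndex) (q := Subgroup.FiniteIndex)
      ⟨⊤, inferInstance⟩ ⟨⊤, inferInstance⟩ fun K₁ _ K₂ _ => ?_
    rw [← algr_subgroup_prod]
    exact algr_le_algRank _

end AlgRank

theorem isOfFinOrder_of_mem_algA_zero {G : Type*} [Group G] {g : G} (hg : g ∈ algA G 0) :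
    IsOfFinOrder g := by
  obtain ⟨H, _, n, hn, ⟨e⟩⟩ := hg
  obtain rfl : n = 0 := Nat.le_zero.mp hn
  have : Finite H := Finite.of_equiv _ e.symm.toEquiv
  have : Finite (Subgroup.centralizer {g}) :=
    (Subgroup.finite_iff_finite_and_finiteIndex H).mpr ⟨inferInstance, inferInstance⟩
  exact (Subgroup.centralizer {g}).subtype.isOfFinOrder
    (isOfFinOrder_of_finite ⟨g, Subgroup.mem_centralizer_singleton_iff.mpr rfl⟩)

theorem not_algCovers_zero {G A : Type*} [Group G] [Group A] [IsMulTorsionFree A] (φ : G →* A)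
    (hφ : φ ≠ 1) : ¬ algCovers G 0 := by
  intro h
  obtain ⟨F, hF⟩ := algCovers_iff.mp h
  have hrange : (φ.range : Set A).Finite := (F.finite_toSet.image φ).subset <| by
    rintro _ ⟨x, rfl⟩
    obtain ⟨g, hg, hx⟩ := hF x
    refine ⟨g, hg, ?_⟩
    simpa [inv_mul_eq_one] using (φ.isOfFinOrder (isOfFinOrder_of_mem_algA_zero hx)).eq_one'
  have : Finite φ.range := hrange
  exact hφ <| MonoidHom.ext fun x =>
    (φ.range.subtype.isOfFinOrder (isOfFinOrder_of_finite ⟨φ x, x, rfl⟩)).eq_one'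

theorem one_le_algRank_of_ne_one {G A : Type*} [Group G] [Group A] [IsMulTorsionFree A] (φ : G →* A)
    (hφ : φ ≠ 1) : 1 ≤ algRank G :=
  have h0 : algr G ≠ 0 := fun h0 =>
    not_algCovers_zero φ hφ (algr_le_natCast_iff.mp (by simp [h0]))
  (Order.one_le_iff_ne_zero.mpr h0).trans algr_le_algRank_self

namespace RAAG

variable {V : Type*} {Γ : SimpleGraph V} {H : Type*} [Group H]

def of (v : V) : RAAG Γ := PresentedGroup.of v

theorem of_commute {u v : V} (h : Γ.Adj u v) : Commute (of u : RAAG Γ) (of v) := by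
  rw [← commutatorElement_eq_one_iff_commute, commutatorElement_def]
  have := PresentedGroup.one_of_mem (rels := raagRels Γ) ⟨u, v, h, rfl⟩
  simp only [map_mul, map_inv] at this
  exact this

def lift (f : V → H) (hf : ∀ u v, Γ.Adj u v → Commute (f u) (f v)) : RAAG Γ →* H :=
  PresentedGroup.toGroup <| by
    rintro _ ⟨u, v, huv, rfl⟩
    simpa [← commutatorElement_def] using (hf u v huv).commutator_eq

@[simp]
theorem lift_of (f : V → H) (hf : ∀ u v, Γ.Adj u v → Commute (f u) (f v)) (v : V) :
    lift f hf (of v : RAAG Γ) = f v :=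
  PresentedGroup.toGroup.of _

theorem hom_ext {φ ψ : RAAG Γ →* H} (h : ∀ v, φ (of v) = ψ (of v)) : φ = ψ :=
  PresentedGroup.ext h

theorem commute_of_forall_commute_of {φ : RAAG Γ →* H} {h : H} (hv : ∀ v, Commute h (φ (of v)))
    (x : RAAG Γ) : Commute h (φ x) := by
  have := PresentedGroup.generated_by _ ((Subgroup.centralizer {h}).comap φ)
    (fun v => Subgroup.mem_centralizer_singleton_iff.mpr (hv v).eq.symm) x
  exact (Subgroup.mem_centralizer_singleton_iff.mp this).symm

theorem one_le_algRank [Nonempty V] (Γ : SimpleGraph V) : 1 ≤ algRank (RAAG Γ) := by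
  let deg : RAAG Γ →* Multiplicative ℤ :=
    lift (fun _ => Multiplicative.ofAdd 1) fun _ _ _ => Commute.all _ _
  refine one_le_algRank_of_ne_one deg fun h => ?_
  simpa [deg] using congr($h (of (Classical.arbitrary V)))

section Join

variable {V₁ V₂ : Type*} (G₁ : SimpleGraph V₁) (G₂ : SimpleGraph V₂)

noncomputable def joinToProd : RAAG (G₁.graphJoin G₂) →* RAAG G₁ × RAAG G₂ :=
  lift (Sum.elim (fun v => (of v, 1)) (fun w => (1, of w))) <| by
    rintro (u | u) (v | v) h
    · exact (of_commute (Γ := G₁) h).prod (Commute.one_left 1)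
    · exact (Commute.one_right _).prod (Commute.one_left _)
    · exact (Commute.one_left _).prod (Commute.one_right _)
    · exact (Commute.one_left 1).prod (of_commute (Γ := G₂) h)

noncomputable def inlJoin : RAAG G₁ →* RAAG (G₁.graphJoin G₂) :=
  lift (fun v => of (.inl v)) fun _ _ h => of_commute (show (G₁.graphJoin G₂).Adj _ _ from h)

noncomputable def inrJoin : RAAG G₂ →* RAAG (G₁.graphJoin G₂) :=
  lift (fun v => of (.inr v)) fun _ _ h => of_commute (show (G₁.graphJoin G₂).Adj _ _ from h)

theorem commute_inlJoin_inrJoin (a : RAAG G₁) (b : RAAG G₂) :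
    Commute (inlJoin G₁ G₂ a) (inrJoin G₁ G₂ b) :=
  commute_of_forall_commute_of (fun v => commute_of_forall_commute_of (fun w =>
    of_commute (show (G₁.graphJoin G₂).Adj (.inl v) (.inr w) from trivial)) b |>.symm) a |>.symm

@[simp]
theorem joinToProd_inlJoin (a : RAAG G₁) : joinToProd G₁ G₂ (inlJoin G₁ G₂ a) = (a, 1) :=
  congr($(hom_ext (φ := (joinToProd G₁ G₂).comp (inlJoin G₁ G₂)) (ψ := .inl _ _)
    fun v => by simp [joinToProd, inlJoin]) a)

@[simp]
theorem joinToProd_inrJoin (b : RAAG G₂) : joinToProd G₁ G₂ (inrJoin G₁ G₂ b) = (1, b) :=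
  congr($(hom_ext (φ := (joinToProd G₁ G₂).comp (inrJoin G₁ G₂)) (ψ := .inr _ _)
    fun v => by simp [joinToProd, inrJoin]) b)

noncomputable def joinEquivProd : RAAG (G₁.graphJoin G₂) ≃* RAAG G₁ × RAAG G₂ :=
  (joinToProd G₁ G₂).toMulEquiv
    ((inlJoin G₁ G₂).noncommCoprod (inrJoin G₁ G₂) (commute_inlJoin_inrJoin G₁ G₂))
    (hom_ext <| by rintro (v | w) <;> simp [joinToProd, inlJoin, inrJoin])
    (MonoidHom.ext fun x => by simp)

end Join

end RAAG

theorem stmt_19_general {V₁ V₂ : Type*} [Nonempty V₁] [Nonempty V₂]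
    (G₁ : SimpleGraph V₁) (G₂ : SimpleGraph V₂) :
    algRank (RAAG (G₁.graphJoin G₂)) = algRank (RAAG G₁) + algRank (RAAG G₂) ∧
      2 ≤ algRank (RAAG (G₁.graphJoin G₂)) := by
  have hsum : algRank (RAAG (G₁.graphJoin G₂)) = algRank (RAAG G₁) + algRank (RAAG G₂) :=
    (algRank_congr (RAAG.joinEquivProd G₁ G₂)).trans algRank_prod
  refine ⟨hsum, hsum ▸ ?_⟩
  calc (2 : ℕ∞) = 1 + 1 := one_add_one_eq_two.symm
    _ ≤ _ := add_le_add (RAAG.one_le_algRank G₁) (RAAG.one_le_algRank G₂)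

/-- If `Γ` is the join of two nonempty graphs `Γ₁` and `Γ₂`, then
`rank(A_Γ) = rank(A_{Γ₁}) + rank(A_{Γ₂})`; in particular `rank(A_Γ) ≥ 2`. -/
theorem stmt_19 {V₁ V₂ : Type*} [Fintype V₁] [Fintype V₂] [Nonempty V₁] [Nonempty V₂]
    (G₁ : SimpleGraph V₁) (G₂ : SimpleGraph V₂) :
    algRank (RAAG (G₁.graphJoin G₂)) = algRank (RAAG G₁) + algRank (RAAG G₂) ∧
      2 ≤ algRank (RAAG (G₁.graphJoin G₂)) :=
  stmt_19_general G₁ G₂
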